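/- arXiv:1911.02421 — 7 statements merged into one kernel-verified Lean document; each statement's English description precedes it below -/
import Mathlib

section
/- Let H be a real Hilbert space, let A and B be bounded linear operators on H, let T > 0, let x₀ ∈ H, and let u : [0,T] → H be Bochner integrable. Define x : [0,T] → H by x_t = exp(tA) x₀ + ∫₀^t exp((t−s)A) B u_s ds. Then x is continuous, x_0 = x₀, and x satisfies the mild-solution identity x_t = exp((t−a)A) x_a + ∫_a^t exp((t−s)A) B u_s ds for all 0 ≤ a ≤ t ≤ T; moreover, any continuous y : [0,T] → H with y_0 = x₀ satisfying this identity for all 0 ≤ a ≤ t ≤ T equals x. (Existence and uniqueness of the mild solution of ẋ_t = A x_t + B u_t.) -/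
open MeasureTheory NormedSpace Set intervalIntegral

/-!
Variation of constants: since `exp ((t - s) • A) = exp (t • A) * exp ((-s) • A)`, the candidate
solution is `x t = exp (t • A) (x₀ + ∫ s in 0..t, exp ((-s) • A) (B (u s)))`. Continuity is then
that of a primitive of an integrable function, and the restart identity at time `a` is the
additivity of this integral over `[0, a]` and `[a, t]`. Uniqueness is the identity at `a = 0`.
-/

theorem MeasureTheory.IntegrableOn.continuousOn_clm_apply {E F : Type*} [NormedAddCommGroup E]
    [NormedSpace ℝ E] [NormedAddCommGroup F] [NormedSpace ℝ F] {μ : Measure ℝ} {K : Set ℝ}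
    {f : ℝ → E} {L : ℝ → E →L[ℝ] F} (hf : IntegrableOn f K μ) (hL : ContinuousOn L K)
    (hK : IsCompact K) : IntegrableOn (fun s => L s (f s)) K μ := by
  obtain ⟨C, hC⟩ := hK.exists_bound_of_continuousOn hL
  have hmeas : AEStronglyMeasurable (fun s => L s (f s)) (μ.restrict K) :=
    isBoundedBilinearMap_apply.continuous.comp_aestronglyMeasurable
      ((hL.aestronglyMeasurable hK.measurableSet).prodMk hf.1)
  refine Integrable.mono' (hf.norm.const_mul C) hmeas ?_
  filter_upwards [ae_restrict_mem hK.measurableSet] with s hs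
  calc ‖L s (f s)‖ ≤ ‖L s‖ * ‖f s‖ := (L s).le_opNorm _
    _ ≤ C * ‖f s‖ := by gcongr; exact hC s hs

section MildSolution

variable {E : Type*} [NormedAddCommGroup E] [NormedSpace ℝ E] (A : E →L[ℝ] E) (x₀ : E)
  {f : ℝ → E}

noncomputable def mildSolution (f : ℝ → E) (t : ℝ) : E :=
  exp (t • A) x₀ + ∫ s in (0:ℝ)..t, exp ((t - s) • A) (f s)

theorem mildSolution_zero : mildSolution A x₀ f 0 = x₀ := by
  simp [mildSolution]

variable [CompleteSpace E]

theorem exp_add_smul (s t : ℝ) : exp ((s + t) • A) = exp (s • A) * exp (t • A) := by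
  rw [add_smul]
  exact exp_add_of_commute_of_mem_ball (𝕂 := ℝ) (((Commute.refl A).smul_left s).smul_right t)
    (by simp [expSeries_radius_eq_top]) (by simp [expSeries_radius_eq_top])

theorem continuous_exp_neg_smul : Continuous fun s : ℝ => exp ((-s) • A) :=
  (differentiable_exp_smul_const ℝ A).continuous.comp continuous_neg

theorem IntervalIntegrable.exp_neg_smul_apply {a b : ℝ} (hf : IntervalIntegrable f volume a b) :
    IntervalIntegrable (fun s => exp ((-s) • A) (f s)) volume a b := by
  rw [intervalIntegrable_iff'] at hf ⊢
  exact hf.continuousOn_clm_apply (continuous_exp_neg_smul A).continuousOn isCompact_uIcc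

theorem intervalIntegral_exp_sub_smul_apply {a b : ℝ} (hf : IntervalIntegrable f volume a b)
    (t : ℝ) : ∫ s in a..b, exp ((t - s) • A) (f s) =
      exp (t • A) (∫ s in a..b, exp ((-s) • A) (f s)) := by
  rw [← (exp (t • A)).intervalIntegral_comp_comm (hf.exp_neg_smul_apply A)]
  simp_rw [sub_eq_add_neg, exp_add_smul]
  rfl

theorem mildSolution_eq_exp_smul_apply {t : ℝ} (hf : IntervalIntegrable f volume 0 t) :
    mildSolution A x₀ f t = exp (t • A) (x₀ + ∫ s in (0:ℝ)..t, exp ((-s) • A) (f s)) := by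
  rw [mildSolution, intervalIntegral_exp_sub_smul_apply A hf, map_add]

theorem continuousOn_mildSolution {T : ℝ} (hf : IntegrableOn f (Icc 0 T)) :
    ContinuousOn (mildSolution A x₀ f) (Icc 0 T) := by
  have hprim : ContinuousOn (fun t => ∫ s in (0:ℝ)..t, exp ((-s) • A) (f s)) (Icc 0 T) :=
    (continuousOn_primitive <| hf.continuousOn_clm_apply
      (continuous_exp_neg_smul A).continuousOn isCompact_Icc).congr fun t ht => integral_of_le ht.1
  refine ((differentiable_exp_smul_const ℝ A).continuous.continuousOn.clm_apply
    (continuousOn_const.add hprim)).congr fun t ht => mildSolution_eq_exp_smul_apply A x₀ ?_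
  exact (intervalIntegrable_iff_integrableOn_Icc_of_le ht.1).2
    (hf.mono_set (Icc_subset_Icc le_rfl ht.2))

theorem mildSolution_eq_exp_sub_smul_apply_add {a t : ℝ} (h0a : IntervalIntegrable f volume 0 a)
    (hat : IntervalIntegrable f volume a t) :
    mildSolution A x₀ f t =
      exp ((t - a) • A) (mildSolution A x₀ f a) + ∫ s in a..t, exp ((t - s) • A) (f s) := by
  have hexp : exp ((t - a) • A) * exp (a • A) = exp (t • A) := by
    rw [← exp_add_smul, sub_add_cancel]
  rw [mildSolution_eq_exp_smul_apply A x₀ (h0a.trans hat), mildSolution_eq_exp_smul_apply A x₀ h0a,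
    intervalIntegral_exp_sub_smul_apply A hat, ← mul_apply_eq_comp, hexp,
    ← map_add, add_assoc,
    integral_add_adjacent_intervals (h0a.exp_neg_smul_apply A) (hat.exp_neg_smul_apply A)]

end MildSolution

theorem mild_solution_exists_unique_general
    {H : Type*} [NormedAddCommGroup H] [InnerProductSpace ℝ H] [CompleteSpace H]
    (A B : H →L[ℝ] H) (T : ℝ) (x₀ : H) (u : ℝ → H)
    (hu : IntegrableOn u (Set.Icc 0 T))
    (x : ℝ → H)
    (hx : ∀ t, x t = exp (t • A) x₀ + ∫ s in (0:ℝ)..t, exp ((t - s) • A) (B (u s))) :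
    ContinuousOn x (Set.Icc 0 T) ∧ x 0 = x₀ ∧
      (∀ a t : ℝ, 0 ≤ a → a ≤ t → t ≤ T →
        x t = exp ((t - a) • A) (x a) + ∫ s in a..t, exp ((t - s) • A) (B (u s))) ∧
      (∀ y : ℝ → H, ContinuousOn y (Set.Icc 0 T) → y 0 = x₀ →
        (∀ a t : ℝ, 0 ≤ a → a ≤ t → t ≤ T →
          y t = exp ((t - a) • A) (y a) + ∫ s in a..t, exp ((t - s) • A) (B (u s))) →
        ∀ t ∈ Set.Icc (0:ℝ) T, y t = x t) := by
  obtain rfl : x = mildSolution A x₀ (fun s => B (u s)) := funext hx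
  have hf : IntegrableOn (fun s => B (u s)) (Icc 0 T) := B.integrable_comp hu
  have hint {a t : ℝ} (ha : 0 ≤ a) (hat : a ≤ t) (htT : t ≤ T) :
      IntervalIntegrable (fun s => B (u s)) volume a t :=
    (intervalIntegrable_iff_integrableOn_Icc_of_le hat).2 (hf.mono_set (Icc_subset_Icc ha htT))
  refine ⟨continuousOn_mildSolution A x₀ hf, mildSolution_zero A x₀, fun a t ha hat htT =>
    mildSolution_eq_exp_sub_smul_apply_add A x₀ (hint le_rfl ha (hat.trans htT)) (hint ha hat htT),
    fun y _ hy0 hy t ht => ?_⟩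
  rw [hy 0 t le_rfl ht.1 ht.2, hy0, sub_zero, mildSolution]

/-- Existence and uniqueness of the mild solution of `ẋ_t = A x_t + B u_t` on `[0, T]`
for bounded operators `A, B` on a real Hilbert space `H`. -/
theorem mild_solution_exists_unique
    {H : Type*} [NormedAddCommGroup H] [InnerProductSpace ℝ H] [CompleteSpace H]
    (A B : H →L[ℝ] H) (T : ℝ) (hT : 0 < T) (x₀ : H) (u : ℝ → H)
    (hu : IntegrableOn u (Set.Icc 0 T))
    (x : ℝ → H)
    (hx : ∀ t, x t = exp (t • A) x₀ + ∫ s in (0:ℝ)..t, exp ((t - s) • A) (B (u s))) :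
    ContinuousOn x (Set.Icc 0 T) ∧ x 0 = x₀ ∧
      (∀ a t : ℝ, 0 ≤ a → a ≤ t → t ≤ T →
        x t = exp ((t - a) • A) (x a) + ∫ s in a..t, exp ((t - s) • A) (B (u s))) ∧
      (∀ y : ℝ → H, ContinuousOn y (Set.Icc 0 T) → y 0 = x₀ →
        (∀ a t : ℝ, 0 ≤ a → a ≤ t → t ≤ T →
          y t = exp ((t - a) • A) (y a) + ∫ s in a..t, exp ((t - s) • A) (B (u s))) →
        ∀ t ∈ Set.Icc (0:ℝ) T, y t = x t) :=
  mild_solution_exists_unique_general A B T x₀ u hu x hx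
end

section
/- Let α₀ ∈ ℝ, let B = poly_B(A) for a real polynomial poly_B, and let x, u : [0,T] → H with x differentiable such that ẋ_t = α₀ x_t + A x_t + B u_t for all t ∈ [0,T]. Then for each 1 ≤ ℓ ≤ d the eigenstate x̄_t^ℓ = ⟨x_t, f_ℓ⟩ f_ℓ satisfies the decoupled eigensystem dynamics: t ↦ x̄_t^ℓ is differentiable with d/dt x̄_t^ℓ = (α₀ + λ_ℓ) x̄_t^ℓ + poly_B(λ_ℓ) ū_t^ℓ, where ū_t^ℓ = ⟨u_t, f_ℓ⟩ f_ℓ. -/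
open RealInnerProductSpace

/-- Decoupled eigensystem dynamics: if `ẋ_t = α₀ x_t + A x_t + poly_B(A) u_t`, then each
eigenstate `x̄_t^ℓ = ⟨x_t, f_ℓ⟩ f_ℓ` satisfies
`d/dt x̄_t^ℓ = (α₀ + λ_ℓ) x̄_t^ℓ + poly_B(λ_ℓ) ū_t^ℓ`. -/
theorem eigensystem_dynamics_decoupling
    {H : Type*} [NormedAddCommGroup H] [InnerProductSpace ℝ H] [CompleteSpace H]
    {d : ℕ} (f : Fin d → H) (hf : Orthonormal ℝ f) (lam : Fin d → ℝ)
    (A : H →L[ℝ] H)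
    (hA : ∀ v : H, A v = ∑ ℓ : Fin d, (lam ℓ * ⟪v, f ℓ⟫) • f ℓ)
    (T : ℝ) (hT : 0 < T) (α₀ : ℝ) (polyB : Polynomial ℝ)
    (B : H →L[ℝ] H) (hB : B = Polynomial.aeval A polyB)
    (x u : ℝ → H)
    (hx : ∀ t ∈ Set.Icc (0:ℝ) T, HasDerivAt x (α₀ • x t + A (x t) + B (u t)) t) :
    ∀ ℓ : Fin d, ∀ t ∈ Set.Icc (0:ℝ) T,
      HasDerivAt (fun s => ⟪x s, f ℓ⟫ • f ℓ)
        ((α₀ + lam ℓ) • (⟪x t, f ℓ⟫ • f ℓ)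
          + Polynomial.eval (lam ℓ) polyB • (⟪u t, f ℓ⟫ • f ℓ)) t := by
  intro ℓ t ht
  -- key: ⟪A v, f ℓ⟫ = lam ℓ * ⟪v, f ℓ⟫
  have hAin : ∀ v : H, ⟪A v, f ℓ⟫ = lam ℓ * ⟪v, f ℓ⟫ := by
    intro v
    rw [hA v, sum_inner]
    have : ∀ m : Fin d, ⟪(lam m * ⟪v, f m⟫) • f m, f ℓ⟫
        = if m = ℓ then lam m * ⟪v, f m⟫ else 0 := by
      intro m
      rw [real_inner_smul_left, orthonormal_iff_ite.mp hf m ℓ]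
      split <;> simp
    simp [this]
  have hpow : ∀ (k : ℕ) (v : H), ⟪(A ^ k) v, f ℓ⟫ = lam ℓ ^ k * ⟪v, f ℓ⟫ := by
    intro k
    induction k with
    | zero => intro v; simp
    | succ n ih =>
      intro v
      have : (A ^ (n + 1)) v = A ((A ^ n) v) := by
        rw [pow_succ' A n]; rfl
      rw [this, hAin, ih, pow_succ']; ring
  have haev : ∀ (p : Polynomial ℝ) (v : H),
      ⟪(Polynomial.aeval A p) v, f ℓ⟫ = Polynomial.eval (lam ℓ) p * ⟪v, f ℓ⟫ := by
    intro p
    induction p using Polynomial.induction_on' with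
    | add p q hp hq =>
      intro v
      rw [map_add, ContinuousLinearMap.add_apply, inner_add_left, hp, hq,
        Polynomial.eval_add]
      ring
    | monomial n c =>
      intro v
      rw [Polynomial.aeval_monomial, Polynomial.eval_monomial]
      have : (algebraMap ℝ (H →L[ℝ] H) c * A ^ n) v = c • ((A ^ n) v) := by
        simp [Algebra.algebraMap_eq_smul_one]
      rw [this, real_inner_smul_left, hpow]
      ring
  have hBin : ∀ v : H, ⟪B v, f ℓ⟫ = Polynomial.eval (lam ℓ) polyB * ⟪v, f ℓ⟫ := by
    intro v; rw [hB]; exact haev polyB v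
  -- the projection map
  set L : H →L[ℝ] H := (innerSL ℝ (f ℓ)).smulRight (f ℓ) with hL
  have hLapp : ∀ v : H, L v = ⟪v, f ℓ⟫ • f ℓ := by
    intro v; simp [hL, real_inner_comm]
  have hderiv := L.hasFDerivAt.comp_hasDerivAt t (hx t ht)
  have heq : (fun s => ⟪x s, f ℓ⟫ • f ℓ) = L ∘ x := by
    funext s; simp [hLapp]
  rw [heq]
  convert hderiv using 1
  rw [hLapp, inner_add_left, inner_add_left, real_inner_smul_left, hAin, hBin]
  module
end

section
/- Let α₀ ∈ ℝ, let B = poly_B(A) for a real polynomial poly_B with constant term β₀, and let x, u : [0,T] → H with x differentiable such that ẋ_t = α₀ x_t + A x_t + B u_t for all t ∈ [0,T]. Then the auxiliary state x̆_t = x_t − Σ_{ℓ=1}^d ⟨x_t, f_ℓ⟩ f_ℓ satisfies the auxiliary system dynamics: t ↦ x̆_t is differentiable with d/dt x̆_t = α₀ x̆_t + β₀ ŭ_t, where ŭ_t = u_t − Σ_{ℓ=1}^d ⟨u_t, f_ℓ⟩ f_ℓ. -/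
/-!
Let `Q v = v - ∑ ℓ ⟪v, f ℓ⟫ f ℓ` be the projection onto the orthogonal complement of the span of
the `f ℓ`. The range of `A` lies in that span, so `Q A = 0`; hence `Q` annihilates every positive
power of `A` and `Q poly_B(A) = β₀ Q`. Applying the bounded linear map `Q` to the state equation
gives `d/dt (Q x) = α₀ Q x + β₀ Q u`.
-/

open RealInnerProductSpace Polynomial

theorem Polynomial.mul_aeval_of_mul_eq_zero {R S : Type*} [CommSemiring R] [Semiring S]
    [Algebra R S] {q a : S} (h : q * a = 0) (p : R[X]) :
    q * aeval a p = p.coeff 0 • q := by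
  conv_lhs => rw [← X_mul_divX_add p]
  rw [map_add, map_mul, aeval_X, aeval_C, mul_add, ← mul_assoc, h, zero_mul, zero_add,
    Algebra.algebraMap_eq_smul_one, mul_smul_comm, mul_one]

section residualProj

variable {H : Type*} [NormedAddCommGroup H] [InnerProductSpace ℝ H] {ι : Type*} [Fintype ι]

noncomputable def residualProj (f : ι → H) : H →L[ℝ] H :=
  ContinuousLinearMap.id ℝ H - ∑ i, (innerSL ℝ (f i)).smulRight (f i)

theorem residualProj_apply (f : ι → H) (v : H) :
    residualProj f v = v - ∑ i, ⟪v, f i⟫ • f i := by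
  simp [residualProj, real_inner_comm]

theorem residualProj_sum_smul {f : ι → H} (hf : Orthonormal ℝ f) (c : ι → ℝ) :
    residualProj f (∑ i, c i • f i) = 0 := by
  simp only [residualProj_apply, hf.inner_left_fintype, conj_trivial, sub_self]

end residualProj

theorem auxiliary_system_dynamics_decoupling_general
    {H : Type*} [NormedAddCommGroup H] [InnerProductSpace ℝ H]
    {d : ℕ} (f : Fin d → H) (hf : Orthonormal ℝ f) (lam : Fin d → ℝ)
    (A : H →L[ℝ] H)
    (hA : ∀ v : H, A v = ∑ ℓ : Fin d, (lam ℓ * ⟪v, f ℓ⟫) • f ℓ)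
    (T : ℝ) (α₀ β₀ : ℝ) (polyB : Polynomial ℝ)
    (hβ₀ : β₀ = polyB.coeff 0)
    (B : H →L[ℝ] H) (hB : B = Polynomial.aeval A polyB)
    (x u : ℝ → H)
    (hx : ∀ t ∈ Set.Icc (0:ℝ) T, HasDerivAt x (α₀ • x t + A (x t) + B (u t)) t) :
    ∀ t ∈ Set.Icc (0:ℝ) T,
      HasDerivAt (fun s => x s - ∑ ℓ : Fin d, ⟪x s, f ℓ⟫ • f ℓ)
        (α₀ • (x t - ∑ ℓ : Fin d, ⟪x t, f ℓ⟫ • f ℓ)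
          + β₀ • (u t - ∑ ℓ : Fin d, ⟪u t, f ℓ⟫ • f ℓ)) t := by
  intro t ht
  set Q := residualProj f
  have hQA : Q * A = 0 := by
    ext v
    simp [hA, Q, residualProj_sum_smul hf]
  have hQB : Q * B = β₀ • Q := by
    rw [hB, hβ₀, mul_aeval_of_mul_eq_zero hQA]
  have hQx := Q.hasFDerivAt.comp_hasDerivAt t (hx t ht)
  rw [map_add, map_add, ← mul_apply_eq_comp Q A, ← mul_apply_eq_comp Q B, hQA, hQB] at hQx
  simpa [Q, Function.comp_def, residualProj_apply] using hQx

/-- Decoupled auxiliary system dynamics: if `ẋ_t = α₀ x_t + A x_t + poly_B(A) u_t` with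
`β₀` the constant term of `poly_B`, then the auxiliary state
`x̆_t = x_t − Σ_ℓ ⟨x_t, f_ℓ⟩ f_ℓ` satisfies `d/dt x̆_t = α₀ x̆_t + β₀ ŭ_t`. -/
theorem auxiliary_system_dynamics_decoupling
    {H : Type*} [NormedAddCommGroup H] [InnerProductSpace ℝ H] [CompleteSpace H]
    {d : ℕ} (f : Fin d → H) (hf : Orthonormal ℝ f) (lam : Fin d → ℝ)
    (A : H →L[ℝ] H)
    (hA : ∀ v : H, A v = ∑ ℓ : Fin d, (lam ℓ * ⟪v, f ℓ⟫) • f ℓ)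
    (T : ℝ) (hT : 0 < T) (α₀ β₀ : ℝ) (polyB : Polynomial ℝ)
    (hβ₀ : β₀ = polyB.coeff 0)
    (B : H →L[ℝ] H) (hB : B = Polynomial.aeval A polyB)
    (x u : ℝ → H)
    (hx : ∀ t ∈ Set.Icc (0:ℝ) T, HasDerivAt x (α₀ • x t + A (x t) + B (u t)) t) :
    ∀ t ∈ Set.Icc (0:ℝ) T,
      HasDerivAt (fun s => x s - ∑ ℓ : Fin d, ⟪x s, f ℓ⟫ • f ℓ)
        (α₀ • (x t - ∑ ℓ : Fin d, ⟪x t, f ℓ⟫ • f ℓ)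
          + β₀ • (u t - ∑ ℓ : Fin d, ⟪u t, f ℓ⟫ • f ℓ)) t :=
  auxiliary_system_dynamics_decoupling_general f hf lam A hA T α₀ β₀ polyB hβ₀ B hB x u hx
end

section
/- Let Q = poly_Q(A) (constant term q₀) and P₀ = poly_{P₀}(A) (constant term z₀), let T > 0, and let x, u : [0,T] → H be continuous. Then the quadratic cost J = ∫₀^T (⟨x_t, Q x_t⟩ + ⟨u_t, u_t⟩) dt + ⟨x_T, P₀ x_T⟩ decomposes as J = J̆ + Σ_{ℓ=1}^d J̄^ℓ, where J̆ = ∫₀^T (q₀‖x̆_t‖² + ‖ŭ_t‖²) dt + z₀‖x̆_T‖² and J̄^ℓ = ∫₀^T (poly_Q(λ_ℓ)‖x̄_t^ℓ‖² + ‖ū_t^ℓ‖²) dt + poly_{P₀}(λ_ℓ)‖x̄_T^ℓ‖². -/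
/-!
On `v = v̆ + Σ ⟪v, f ℓ⟫ • f ℓ` the operator `A` kills `v̆` and scales `f ℓ` by `λ_ℓ`, so by
induction on `p` the operator `p(A)` acts as `p(0) • v̆ + Σ p(λ_ℓ) ⟪v, f ℓ⟫ • f ℓ`. Since `v̆` is
orthogonal to every `f ℓ`, the quadratic form `⟪v, p(A) v⟫` splits into `p(0) ‖v̆‖²` plus the
`p(λ_ℓ) ‖v̄^ℓ‖²`, and `‖u‖²` splits likewise by Pythagoras. Integrating this pointwise splitting
of the running cost, and adding the one for the terminal cost, gives the decomposition.
-/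

open RealInnerProductSpace Polynomial MeasureTheory intervalIntegral

namespace Orthonormal

variable {H : Type*} [NormedAddCommGroup H] [InnerProductSpace ℝ H] {d : ℕ} {f : Fin d → H}

lemma inner_sub_sum_inner_smul_eq_zero (hf : Orthonormal ℝ f) (v : H) (ℓ : Fin d) :
    ⟪v - ∑ j, ⟪v, f j⟫ • f j, f ℓ⟫ = 0 := by
  rw [inner_sub_left, hf.inner_left_fintype, conj_trivial, sub_self]

lemma inner_self_sub_sum_inner_smul_eq_norm_sq (hf : Orthonormal ℝ f) (v : H) :
    ⟪v, v - ∑ j, ⟪v, f j⟫ • f j⟫ = ‖v - ∑ j, ⟪v, f j⟫ • f j‖ ^ 2 := by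
  have hperp : ⟪∑ j, ⟪v, f j⟫ • f j, v - ∑ j, ⟪v, f j⟫ • f j⟫ = 0 := by
    simp only [sum_inner, real_inner_smul_left, real_inner_comm _ (f _),
      hf.inner_sub_sum_inner_smul_eq_zero, mul_zero, Finset.sum_const_zero]
  rw [← real_inner_self_eq_norm_sq, inner_sub_left _ _ (v - _), hperp, sub_zero]

lemma norm_inner_smul_sq (hf : Orthonormal ℝ f) (v : H) (ℓ : Fin d) :
    ‖⟪v, f ℓ⟫ • f ℓ‖ ^ 2 = ⟪v, f ℓ⟫ ^ 2 := by
  rw [norm_smul, hf.1 ℓ, mul_one, Real.norm_eq_abs, sq_abs]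

lemma inner_sum_mul_inner_smul (hf : Orthonormal ℝ f) (c : Fin d → ℝ) (v : H) :
    ⟪v, ∑ ℓ, (c ℓ * ⟪v, f ℓ⟫) • f ℓ⟫ = ∑ ℓ, c ℓ * ‖⟪v, f ℓ⟫ • f ℓ‖ ^ 2 := by
  simp only [inner_sum, real_inner_smul_right, hf.norm_inner_smul_sq, sq]
  exact Finset.sum_congr rfl fun ℓ _ => by ring

lemma inner_self_eq_norm_sub_sum_sq_add_sum (hf : Orthonormal ℝ f) (v : H) :
    ⟪v, v⟫ = ‖v - ∑ ℓ, ⟪v, f ℓ⟫ • f ℓ‖ ^ 2 + ∑ ℓ, ‖⟪v, f ℓ⟫ • f ℓ‖ ^ 2 := by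
  have hsplit := inner_add_right (𝕜 := ℝ) v (v - ∑ ℓ, ⟪v, f ℓ⟫ • f ℓ) (∑ ℓ, ⟪v, f ℓ⟫ • f ℓ)
  rw [sub_add_cancel] at hsplit
  simp only [hsplit, hf.inner_self_sub_sum_inner_smul_eq_norm_sq, inner_sum,
    real_inner_smul_right, hf.norm_inner_smul_sq, sq]

end Orthonormal

section SpectralCalculus

variable {H : Type*} [NormedAddCommGroup H] [InnerProductSpace ℝ H] {d : ℕ} {f : Fin d → H}
  {lam : Fin d → ℝ} {A : H →L[ℝ] H}

lemma aeval_apply_of_orthonormal (hf : Orthonormal ℝ f)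
    (hA : ∀ v, A v = ∑ ℓ, (lam ℓ * ⟪v, f ℓ⟫) • f ℓ) (p : ℝ[X]) (v : H) :
    aeval A p v = p.coeff 0 • (v - ∑ ℓ, ⟪v, f ℓ⟫ • f ℓ)
      + ∑ ℓ, (p.eval (lam ℓ) * ⟪v, f ℓ⟫) • f ℓ := by
  have hinner : ∀ v ℓ, ⟪A v, f ℓ⟫ = lam ℓ * ⟪v, f ℓ⟫ := fun v ℓ => by
    rw [hA, hf.inner_left_fintype, conj_trivial]
  have hrange : ∀ v, A v - ∑ ℓ, ⟪A v, f ℓ⟫ • f ℓ = 0 := fun v => by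
    simp only [hinner, ← hA, sub_self]
  induction p using Polynomial.induction_on generalizing v with
  | C a =>
    simp only [aeval_C, Algebra.algebraMap_eq_smul_one, smul_apply, one_apply_eq_self,
      coeff_C_zero, eval_C, mul_smul, ← Finset.smul_sum, ← smul_add, sub_add_cancel]
  | add p q hp hq =>
    simp only [map_add, add_apply, hp, hq, coeff_add, eval_add, add_smul, add_mul,
      Finset.sum_add_distrib]
    abel
  | monomial n a ih =>
    rw [pow_succ, ← mul_assoc, map_mul, aeval_X, mul_apply_eq_comp, ih, hrange]
    simp only [smul_zero, zero_add, coeff_mul_X_zero, zero_smul, eval_mul_X, hinner]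
    simp_rw [mul_assoc]

lemma inner_aeval_apply_self_of_orthonormal (hf : Orthonormal ℝ f)
    (hA : ∀ v, A v = ∑ ℓ, (lam ℓ * ⟪v, f ℓ⟫) • f ℓ) (p : ℝ[X]) (v : H) :
    ⟪v, aeval A p v⟫ = p.coeff 0 * ‖v - ∑ ℓ, ⟪v, f ℓ⟫ • f ℓ‖ ^ 2
      + ∑ ℓ, p.eval (lam ℓ) * ‖⟪v, f ℓ⟫ • f ℓ‖ ^ 2 := by
  rw [aeval_apply_of_orthonormal hf hA, inner_add_right, real_inner_smul_right,
    hf.inner_self_sub_sum_inner_smul_eq_norm_sq, hf.inner_sum_mul_inner_smul]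

end SpectralCalculus

theorem cost_functional_decomposition_general
    {H : Type*} [NormedAddCommGroup H] [InnerProductSpace ℝ H]
    {d : ℕ} (f : Fin d → H) (hf : Orthonormal ℝ f) (lam : Fin d → ℝ)
    (A : H →L[ℝ] H)
    (hA : ∀ v : H, A v = ∑ ℓ : Fin d, (lam ℓ * ⟪v, f ℓ⟫) • f ℓ)
    (polyQ polyP₀ : Polynomial ℝ) (q₀ z₀ : ℝ)
    (hq₀ : q₀ = polyQ.coeff 0) (hz₀ : z₀ = polyP₀.coeff 0)
    (Q P₀ : H →L[ℝ] H)
    (hQ : Q = Polynomial.aeval A polyQ) (hP₀ : P₀ = Polynomial.aeval A polyP₀)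
    (T : ℝ) (hT : 0 < T) (x u : ℝ → H)
    (hx : ContinuousOn x (Set.Icc 0 T)) (hu : ContinuousOn u (Set.Icc 0 T)) :
    (∫ t in (0:ℝ)..T, (⟪x t, Q (x t)⟫ + ⟪u t, u t⟫)) + ⟪x T, P₀ (x T)⟫
      = ((∫ t in (0:ℝ)..T,
            (q₀ * ‖x t - ∑ ℓ : Fin d, ⟪x t, f ℓ⟫ • f ℓ‖ ^ 2
              + ‖u t - ∑ ℓ : Fin d, ⟪u t, f ℓ⟫ • f ℓ‖ ^ 2))
          + z₀ * ‖x T - ∑ ℓ : Fin d, ⟪x T, f ℓ⟫ • f ℓ‖ ^ 2)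
        + ∑ ℓ : Fin d,
          ((∫ t in (0:ℝ)..T,
              (Polynomial.eval (lam ℓ) polyQ * ‖⟪x t, f ℓ⟫ • f ℓ‖ ^ 2
                + ‖⟪u t, f ℓ⟫ • f ℓ‖ ^ 2))
            + Polynomial.eval (lam ℓ) polyP₀ * ‖⟪x T, f ℓ⟫ • f ℓ‖ ^ 2) := by
  subst hQ hP₀ hq₀ hz₀
  have hrunning : ∀ t, ⟪x t, aeval A polyQ (x t)⟫ + ⟪u t, u t⟫
      = (polyQ.coeff 0 * ‖x t - ∑ ℓ, ⟪x t, f ℓ⟫ • f ℓ‖ ^ 2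
          + ‖u t - ∑ ℓ, ⟪u t, f ℓ⟫ • f ℓ‖ ^ 2)
        + ∑ ℓ, (polyQ.eval (lam ℓ) * ‖⟪x t, f ℓ⟫ • f ℓ‖ ^ 2 + ‖⟪u t, f ℓ⟫ • f ℓ‖ ^ 2) := by
    intro t
    rw [inner_aeval_apply_self_of_orthonormal hf hA, hf.inner_self_eq_norm_sub_sum_sq_add_sum,
      Finset.sum_add_distrib]
    ring
  have hint₀ : IntervalIntegrable (fun t => polyQ.coeff 0 * ‖x t - ∑ ℓ, ⟪x t, f ℓ⟫ • f ℓ‖ ^ 2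
      + ‖u t - ∑ ℓ, ⟪u t, f ℓ⟫ • f ℓ‖ ^ 2) volume 0 T :=
    ContinuousOn.intervalIntegrable_of_Icc hT.le (by fun_prop)
  have hint : ∀ ℓ, IntervalIntegrable (fun t => polyQ.eval (lam ℓ) * ‖⟪x t, f ℓ⟫ • f ℓ‖ ^ 2
      + ‖⟪u t, f ℓ⟫ • f ℓ‖ ^ 2) volume 0 T := fun ℓ =>
    ContinuousOn.intervalIntegrable_of_Icc hT.le (by fun_prop)
  have hint_sum : IntervalIntegrable (fun t => ∑ ℓ, (polyQ.eval (lam ℓ) * ‖⟪x t, f ℓ⟫ • f ℓ‖ ^ 2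
      + ‖⟪u t, f ℓ⟫ • f ℓ‖ ^ 2)) volume 0 T :=
    ContinuousOn.intervalIntegrable_of_Icc hT.le (by fun_prop)
  simp_rw [hrunning]
  rw [integral_add hint₀ hint_sum, integral_finsetSum fun ℓ _ => hint ℓ,
    inner_aeval_apply_self_of_orthonormal hf hA, Finset.sum_add_distrib]
  ring

/-- Decomposition of the quadratic LQR cost `J = ∫₀^T (⟨x_t, Q x_t⟩ + ⟨u_t, u_t⟩) dt
+ ⟨x_T, P₀ x_T⟩` into the auxiliary cost `J̆` plus the sum of the eigendirection costs
`J̄^ℓ`. -/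
theorem cost_functional_decomposition
    {H : Type*} [NormedAddCommGroup H] [InnerProductSpace ℝ H] [CompleteSpace H]
    {d : ℕ} (f : Fin d → H) (hf : Orthonormal ℝ f) (lam : Fin d → ℝ)
    (A : H →L[ℝ] H)
    (hA : ∀ v : H, A v = ∑ ℓ : Fin d, (lam ℓ * ⟪v, f ℓ⟫) • f ℓ)
    (polyQ polyP₀ : Polynomial ℝ) (q₀ z₀ : ℝ)
    (hq₀ : q₀ = polyQ.coeff 0) (hz₀ : z₀ = polyP₀.coeff 0)
    (Q P₀ : H →L[ℝ] H)
    (hQ : Q = Polynomial.aeval A polyQ) (hP₀ : P₀ = Polynomial.aeval A polyP₀)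
    (T : ℝ) (hT : 0 < T) (x u : ℝ → H)
    (hx : ContinuousOn x (Set.Icc 0 T)) (hu : ContinuousOn u (Set.Icc 0 T)) :
    (∫ t in (0:ℝ)..T, (⟪x t, Q (x t)⟫ + ⟪u t, u t⟫)) + ⟪x T, P₀ (x T)⟫
      = ((∫ t in (0:ℝ)..T,
            (q₀ * ‖x t - ∑ ℓ : Fin d, ⟪x t, f ℓ⟫ • f ℓ‖ ^ 2
              + ‖u t - ∑ ℓ : Fin d, ⟪u t, f ℓ⟫ • f ℓ‖ ^ 2))
          + z₀ * ‖x T - ∑ ℓ : Fin d, ⟪x T, f ℓ⟫ • f ℓ‖ ^ 2)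
        + ∑ ℓ : Fin d,
          ((∫ t in (0:ℝ)..T,
              (Polynomial.eval (lam ℓ) polyQ * ‖⟪x t, f ℓ⟫ • f ℓ‖ ^ 2
                + ‖⟪u t, f ℓ⟫ • f ℓ‖ ^ 2))
            + Polynomial.eval (lam ℓ) polyP₀ * ‖⟪x T, f ℓ⟫ • f ℓ‖ ^ 2) :=
  cost_functional_decomposition_general f hf lam A hA polyQ polyP₀ q₀ z₀ hq₀ hz₀ Q P₀ hQ hP₀ T hT x
    u hx hu
end

section
/- Let a ∈ ℝ, b ∈ ℝ, q ≥ 0, z₀ ≥ 0, and T > 0. Then there exists a unique differentiable function M : [0,T] → ℝ satisfying the scalar Riccati equation Ṁ_t = 2a M_t − b² M_t² + q with M_0 = z₀; moreover M_t ≥ 0 for all t ∈ [0,T]. (In particular the Riccati equation does not blow up on any finite horizon.) -/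
/-!
Substituting `M = x / y` turns `Ṁ = 2aM - b²M² + q` into the linear system
`ẋ = a x + q y`, `ẏ = b² x - a y`, whose matrix squares to `d² = a² + b² q` times the identity.
Its solution from `(z₀, 1)` is explicit in `cosh (d t)` and `sinh (d t) / d`, and since `d ≥ |a|`
and `cosh - sinh > 0`, one sees `y > 0` and `x ≥ 0` for all `t ≥ 0`: the quotient never blows up
and stays nonnegative. Uniqueness holds because the right-hand side is locally Lipschitz.
-/

open Set Real

section Uniqueness

variable {E : Type*} [NormedAddCommGroup E] [NormedSpace ℝ E]

/-- Grönwall applies with the Lipschitz constant of `v` on the compact union of the two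
trajectories. -/
theorem eqOn_Icc_of_hasDerivWithinAt_of_locallyLipschitz {v : E → E} (hv : LocallyLipschitz v)
    {f g : ℝ → E} {a b : ℝ}
    (hf : ∀ t ∈ Icc a b, HasDerivWithinAt f (v (f t)) (Icc a b) t)
    (hg : ∀ t ∈ Icc a b, HasDerivWithinAt g (v (g t)) (Icc a b) t)
    (ha : f a = g a) : EqOn f g (Icc a b) := by
  have hf_cont : ContinuousOn f (Icc a b) := fun t ht => (hf t ht).continuousWithinAt
  have hg_cont : ContinuousOn g (Icc a b) := fun t ht => (hg t ht).continuousWithinAt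
  set S := f '' Icc a b ∪ g '' Icc a b
  have hS : IsCompact S := (isCompact_Icc.image_of_continuousOn hf_cont).union
    (isCompact_Icc.image_of_continuousOn hg_cont)
  obtain ⟨K, hK⟩ := (hv.locallyLipschitzOn (s := S)).exists_lipschitzOnWith_of_compact hS
  have hIci {h : ℝ → E} (hh : ∀ t ∈ Icc a b, HasDerivWithinAt h (v (h t)) (Icc a b) t) :
      ∀ t ∈ Ico a b, HasDerivWithinAt h (v (h t)) (Ici t) t := fun t ht =>
    (hh t (Ico_subset_Icc_self ht)).mono_of_mem_nhdsWithin (Icc_mem_nhdsGE_of_mem ht)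
  exact ODE_solution_unique_of_mem_Icc_right (v := fun _ => v) (s := fun _ => S)
    (fun _ _ => hK) hf_cont (hIci hf) (fun t ht => .inl ⟨t, Ico_subset_Icc_self ht, rfl⟩)
    hg_cont (hIci hg) (fun t ht => .inr ⟨t, Ico_subset_Icc_self ht, rfl⟩) ha

end Uniqueness

section SinhDiv

/-- The solution of `s'' = d² s`, `s 0 = 0`, `s' 0 = 1`, uniformly in `d`. -/
noncomputable def sinhDiv (d t : ℝ) : ℝ := if d = 0 then t else sinh (d * t) / d

variable (d t : ℝ)

lemma sinhDiv_zero : sinhDiv d 0 = 0 := by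
  by_cases hd : d = 0 <;> simp [sinhDiv, hd]

lemma mul_sinhDiv : d * sinhDiv d t = sinh (d * t) := by
  by_cases hd : d = 0
  · simp [sinhDiv, hd]
  · rw [sinhDiv, if_neg hd]
    field_simp

lemma mul_sinhDiv_lt_cosh : d * sinhDiv d t < cosh (d * t) := by
  rw [mul_sinhDiv]
  exact sinh_lt_cosh _

lemma sinhDiv_nonneg {t : ℝ} (ht : 0 ≤ t) : 0 ≤ sinhDiv d t := by
  by_cases hd : d = 0
  · simpa [sinhDiv, hd] using ht
  · rw [sinhDiv, if_neg hd]
    rcases lt_or_gt_of_ne hd with hd | hd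
    · exact div_nonneg_of_nonpos (sinh_nonpos_iff.mpr (mul_nonpos_of_nonpos_of_nonneg hd.le ht))
        hd.le
    · exact div_nonneg (sinh_nonneg_iff.mpr (by positivity)) hd.le

lemma hasDerivAt_cosh_mul : HasDerivAt (fun t => cosh (d * t)) (d ^ 2 * sinhDiv d t) t := by
  refine ((hasDerivAt_cosh (d * t)).comp t ((hasDerivAt_id t).const_mul d)).congr_deriv ?_
  rw [sq, mul_assoc, mul_sinhDiv]
  simp [mul_comm]

lemma hasDerivAt_sinhDiv : HasDerivAt (sinhDiv d) (cosh (d * t)) t := by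
  by_cases hd : d = 0
  · have h : sinhDiv d = id := funext fun t => if_pos hd
    rw [h, hd, zero_mul, cosh_zero]
    exact hasDerivAt_id t
  · have h : sinhDiv d = fun t => sinh (d * t) / d := funext fun t => if_neg hd
    rw [h]
    refine (((hasDerivAt_sinh (d * t)).comp t ((hasDerivAt_id t).const_mul d)).div_const d
      ).congr_deriv ?_
    field_simp

end SinhDiv

section Riccati

theorem HasDerivAt.div_of_riccati_linearization {a p q t : ℝ} {x y : ℝ → ℝ} {x' y' : ℝ}
    (hx : HasDerivAt x x' t) (hy : HasDerivAt y y' t)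
    (hx' : x' = a * x t + q * y t) (hy' : y' = p * x t - a * y t) (hyt : y t ≠ 0) :
    HasDerivAt (fun t => x t / y t) (2 * a * (x t / y t) - p * (x t / y t) ^ 2 + q) t := by
  refine (hx.div hy hyt).congr_deriv ?_
  rw [hx', hy']
  field_simp
  ring

variable (a p q z₀ : ℝ)

noncomputable def riccatiRate : ℝ := √(a ^ 2 + p * q)

noncomputable def riccatiNum (t : ℝ) : ℝ :=
  cosh (riccatiRate a p q * t) * z₀ + sinhDiv (riccatiRate a p q) t * (a * z₀ + q)

noncomputable def riccatiDen (t : ℝ) : ℝ :=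
  cosh (riccatiRate a p q * t) + sinhDiv (riccatiRate a p q) t * (p * z₀ - a)

noncomputable def riccatiSol (t : ℝ) : ℝ := riccatiNum a p q z₀ t / riccatiDen a p q z₀ t

lemma riccatiSol_zero : riccatiSol a p q z₀ 0 = z₀ := by
  simp [riccatiSol, riccatiNum, riccatiDen, sinhDiv_zero]

variable {a p q z₀}

lemma hasDerivAt_riccatiNum (hd : 0 ≤ a ^ 2 + p * q) (t : ℝ) :
    HasDerivAt (riccatiNum a p q z₀) (a * riccatiNum a p q z₀ t + q * riccatiDen a p q z₀ t) t := by
  set d := riccatiRate a p q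
  have hd2 : d ^ 2 = a ^ 2 + p * q := sq_sqrt hd
  refine (((hasDerivAt_cosh_mul d t).mul_const z₀).add
    ((hasDerivAt_sinhDiv d t).mul_const (a * z₀ + q))).congr_deriv ?_
  simp only [riccatiNum, riccatiDen]
  linear_combination sinhDiv d t * z₀ * hd2

lemma hasDerivAt_riccatiDen (hd : 0 ≤ a ^ 2 + p * q) (t : ℝ) :
    HasDerivAt (riccatiDen a p q z₀) (p * riccatiNum a p q z₀ t - a * riccatiDen a p q z₀ t) t := by
  set d := riccatiRate a p q
  have hd2 : d ^ 2 = a ^ 2 + p * q := sq_sqrt hd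
  refine ((hasDerivAt_cosh_mul d t).add
    ((hasDerivAt_sinhDiv d t).mul_const (p * z₀ - a))).congr_deriv ?_
  simp only [riccatiNum, riccatiDen]
  linear_combination sinhDiv d t * hd2

lemma abs_le_riccatiRate (hpq : 0 ≤ p * q) : |a| ≤ riccatiRate a p q := by
  rw [riccatiRate, ← sqrt_sq_eq_abs]
  exact sqrt_le_sqrt (le_add_of_nonneg_right hpq)

/-- Splitting off `cosh (d t) - d · sinhDiv d t > 0` leaves a nonnegative multiple of
`sinhDiv d t`, since `d ≥ |a|`. -/
lemma riccatiDen_pos (hp : 0 ≤ p) (hq : 0 ≤ q) (hz₀ : 0 ≤ z₀) {t : ℝ} (ht : 0 ≤ t) :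
    0 < riccatiDen a p q z₀ t := by
  set d := riccatiRate a p q
  have hda := abs_le.mp (abs_le_riccatiRate (a := a) (mul_nonneg hp hq))
  have hs := sinhDiv_nonneg d ht
  have hc := mul_sinhDiv_lt_cosh d t
  calc 0 < (cosh (d * t) - d * sinhDiv d t) + sinhDiv d t * (p * z₀ + (d - a)) := by
        have : 0 ≤ sinhDiv d t * (p * z₀ + (d - a)) :=
          mul_nonneg hs (by nlinarith [mul_nonneg hp hz₀])
        linarith
    _ = riccatiDen a p q z₀ t := by simp only [riccatiDen, d]; ring

lemma riccatiNum_nonneg (hpq : 0 ≤ p * q) (hq : 0 ≤ q) (hz₀ : 0 ≤ z₀) {t : ℝ} (ht : 0 ≤ t) :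
    0 ≤ riccatiNum a p q z₀ t := by
  set d := riccatiRate a p q
  have hda := abs_le.mp (abs_le_riccatiRate (a := a) hpq)
  have hs := sinhDiv_nonneg d ht
  have hc := mul_sinhDiv_lt_cosh d t
  calc 0 ≤ z₀ * (cosh (d * t) - d * sinhDiv d t) + sinhDiv d t * (z₀ * (d + a) + q) := by
        have h1 := mul_nonneg hz₀ (sub_nonneg.mpr hc.le)
        have h2 := mul_nonneg hs (add_nonneg (mul_nonneg hz₀ (by linarith : 0 ≤ d + a)) hq)
        linarith
    _ = riccatiNum a p q z₀ t := by simp only [riccatiNum, d]; ring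

lemma riccatiSol_nonneg (hp : 0 ≤ p) (hq : 0 ≤ q) (hz₀ : 0 ≤ z₀) {t : ℝ} (ht : 0 ≤ t) :
    0 ≤ riccatiSol a p q z₀ t :=
  div_nonneg (riccatiNum_nonneg (mul_nonneg hp hq) hq hz₀ ht) (riccatiDen_pos hp hq hz₀ ht).le

lemma hasDerivAt_riccatiSol (hp : 0 ≤ p) (hq : 0 ≤ q) (hz₀ : 0 ≤ z₀) {t : ℝ} (ht : 0 ≤ t) :
    HasDerivAt (riccatiSol a p q z₀)
      (2 * a * riccatiSol a p q z₀ t - p * riccatiSol a p q z₀ t ^ 2 + q) t :=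
  have hd : 0 ≤ a ^ 2 + p * q := by positivity
  (hasDerivAt_riccatiNum hd t).div_of_riccati_linearization (hasDerivAt_riccatiDen hd t) rfl rfl
    (riccatiDen_pos hp hq hz₀ ht).ne'

end Riccati

theorem scalar_riccati_exists_unique_nonneg_general
    (a b q z₀ T : ℝ) (hq : 0 ≤ q) (hz₀ : 0 ≤ z₀) :
    ∃ M : ℝ → ℝ,
      ((∀ t ∈ Set.Icc (0:ℝ) T,
          HasDerivWithinAt M (2 * a * M t - b ^ 2 * (M t) ^ 2 + q) (Set.Icc 0 T) t) ∧
        M 0 = z₀ ∧ ∀ t ∈ Set.Icc (0:ℝ) T, 0 ≤ M t) ∧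
      ∀ M' : ℝ → ℝ,
        ((∀ t ∈ Set.Icc (0:ℝ) T,
            HasDerivWithinAt M' (2 * a * M' t - b ^ 2 * (M' t) ^ 2 + q) (Set.Icc 0 T) t) ∧
          M' 0 = z₀) →
        ∀ t ∈ Set.Icc (0:ℝ) T, M' t = M t := by
  have hb : 0 ≤ b ^ 2 := sq_nonneg b
  have hM : ∀ t ∈ Icc (0:ℝ) T, HasDerivWithinAt (riccatiSol a (b ^ 2) q z₀)
      (2 * a * riccatiSol a (b ^ 2) q z₀ t - b ^ 2 * riccatiSol a (b ^ 2) q z₀ t ^ 2 + q)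
      (Icc 0 T) t := fun t ht =>
    (hasDerivAt_riccatiSol hb hq hz₀ ht.1).hasDerivWithinAt
  refine ⟨riccatiSol a (b ^ 2) q z₀,
    ⟨hM, riccatiSol_zero .., fun t ht => riccatiSol_nonneg hb hq hz₀ ht.1⟩, ?_⟩
  rintro M' ⟨hM', hM'0⟩
  have hv : LocallyLipschitz fun m : ℝ => 2 * a * m - b ^ 2 * m ^ 2 + q :=
    ContDiff.locallyLipschitz (𝕂 := ℝ) (by fun_prop)
  exact eqOn_Icc_of_hasDerivWithinAt_of_locallyLipschitz hv hM' hM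
    (hM'0.trans (riccatiSol_zero ..).symm)

/-- Global existence, uniqueness, and nonnegativity of the solution of the scalar
Riccati equation `Ṁ = 2aM − b²M² + q`, `M₀ = z₀ ≥ 0`, `q ≥ 0`, on any finite horizon
`[0, T]`. -/
theorem scalar_riccati_exists_unique_nonneg
    (a b q z₀ T : ℝ) (hq : 0 ≤ q) (hz₀ : 0 ≤ z₀) (hT : 0 < T) :
    ∃ M : ℝ → ℝ,
      ((∀ t ∈ Set.Icc (0:ℝ) T,
          HasDerivWithinAt M (2 * a * M t - b ^ 2 * (M t) ^ 2 + q) (Set.Icc 0 T) t) ∧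
        M 0 = z₀ ∧ ∀ t ∈ Set.Icc (0:ℝ) T, 0 ≤ M t) ∧
      ∀ M' : ℝ → ℝ,
        ((∀ t ∈ Set.Icc (0:ℝ) T,
            HasDerivWithinAt M' (2 * a * M' t - b ^ 2 * (M' t) ^ 2 + q) (Set.Icc 0 T) t) ∧
          M' 0 = z₀) →
        ∀ t ∈ Set.Icc (0:ℝ) T, M' t = M t :=
  scalar_riccati_exists_unique_nonneg_general a b q z₀ T hq hz₀
end

section
/- (Scalar LQR verification.) Let a, b ∈ ℝ, q ≥ 0, p₀ ≥ 0, T > 0, x₀ ∈ ℝ, and let M : [0,T] → ℝ be differentiable with Ṁ_t = 2a M_t − b² M_t² + q and M_0 = p₀. Then: (i) for every differentiable x : [0,T] → ℝ and continuous u : [0,T] → ℝ with ẋ_t = a x_t + b u_t and x_0 = x₀, the cost J(u) = ∫₀^T (q x_t² + u_t²) dt + p₀ x_T² satisfies J(u) ≥ M_T x₀²; and (ii) if moreover u_t = −b M_{T−t} x_t for all t ∈ [0,T], then J(u) = M_T x₀². Hence the feedback law u_t = −b M_{T−t} x_t is optimal with optimal cost M_T x₀². -/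
/-!
Completing the square: along any trajectory, the Riccati equation gives
`d/dt [M_{T-t} x_t²] = (u_t + b M_{T-t} x_t)² - (q x_t² + u_t²)`, so integrating over `[0, T]`
yields `J(u) = M_T x₀² + ∫₀ᵀ (u_t + b M_{T-t} x_t)² dt`. The integral is nonnegative and
vanishes exactly under the feedback `u_t = -b M_{T-t} x_t`.
-/

open Set intervalIntegral

section

variable {a b q T : ℝ} {M x u : ℝ → ℝ}

theorem hasDerivAt_riccati_value {t : ℝ}
    (hM : HasDerivAt M (2 * a * M (T - t) - b ^ 2 * M (T - t) ^ 2 + q) (T - t))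
    (hx : HasDerivAt x (a * x t + b * u t) t) :
    HasDerivAt (fun s => M (T - s) * x s ^ 2)
      ((u t + b * M (T - t) * x t) ^ 2 - (q * x t ^ 2 + u t ^ 2)) t := by
  have hMrev := hM.comp t ((hasDerivAt_id t).const_sub T)
  refine (hMrev.mul (hx.pow 2)).congr_deriv ?_
  simp only [Function.comp_apply, Pi.pow_apply]
  ring

theorem integral_cost_eq (hT : 0 ≤ T)
    (hM : ∀ t ∈ Icc (0 : ℝ) T, HasDerivAt M (2 * a * M t - b ^ 2 * M t ^ 2 + q) t)
    (hx : ∀ t ∈ Icc (0 : ℝ) T, HasDerivAt x (a * x t + b * u t) t)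
    (hu : ContinuousOn u (Icc 0 T)) :
    ∫ t in (0 : ℝ)..T, (q * x t ^ 2 + u t ^ 2)
      = M T * x 0 ^ 2 - M 0 * x T ^ 2 + ∫ t in (0 : ℝ)..T, (u t + b * M (T - t) * x t) ^ 2 := by
  have hIcc : uIcc (0 : ℝ) T = Icc 0 T := uIcc_of_le hT
  have hrev : MapsTo (fun t => T - t) (Icc (0 : ℝ) T) (Icc 0 T) :=
    fun t ht => ⟨by linarith [ht.2], by linarith [ht.1]⟩
  have hxC : ContinuousOn x (Icc 0 T) := fun t ht => (hx t ht).continuousAt.continuousWithinAt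
  have hMC : ContinuousOn (fun t => M (T - t)) (Icc 0 T) :=
    ContinuousOn.comp (fun t ht => (hM t ht).continuousAt.continuousWithinAt)
      (continuous_sub_left T).continuousOn hrev
  have hcostI : IntervalIntegrable (fun t => q * x t ^ 2 + u t ^ 2) MeasureTheory.volume 0 T :=
    ((continuousOn_const.mul (hxC.pow 2)).add (hu.pow 2)).intervalIntegrable_of_Icc hT
  have hsqI : IntervalIntegrable (fun t => (u t + b * M (T - t) * x t) ^ 2)
      MeasureTheory.volume 0 T :=
    ((hu.add ((continuousOn_const.mul hMC).mul hxC)).pow 2).intervalIntegrable_of_Icc hT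
  have hFTC := integral_eq_sub_of_hasDerivAt
    (fun t ht => hasDerivAt_riccati_value (hM (T - t) (hrev (hIcc ▸ ht))) (hx t (hIcc ▸ ht)))
    (hsqI.sub hcostI)
  rw [integral_sub hsqI hcostI, sub_self, sub_zero] at hFTC
  linarith

end

theorem scalar_lqr_verification_general
    (a b q p₀ T x₀ : ℝ) (hT : 0 < T)
    (M : ℝ → ℝ)
    (hM : ∀ t ∈ Set.Icc (0:ℝ) T,
      HasDerivAt M (2 * a * M t - b ^ 2 * (M t) ^ 2 + q) t)
    (hM0 : M 0 = p₀) :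
    (∀ x u : ℝ → ℝ,
      (∀ t ∈ Set.Icc (0:ℝ) T, HasDerivAt x (a * x t + b * u t) t) →
      x 0 = x₀ → ContinuousOn u (Set.Icc 0 T) →
      M T * x₀ ^ 2 ≤ (∫ t in (0:ℝ)..T, (q * (x t) ^ 2 + (u t) ^ 2)) + p₀ * (x T) ^ 2) ∧
    (∀ x u : ℝ → ℝ,
      (∀ t ∈ Set.Icc (0:ℝ) T, HasDerivAt x (a * x t + b * u t) t) →
      x 0 = x₀ → ContinuousOn u (Set.Icc 0 T) →
      (∀ t ∈ Set.Icc (0:ℝ) T, u t = -b * M (T - t) * x t) →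
      (∫ t in (0:ℝ)..T, (q * (x t) ^ 2 + (u t) ^ 2)) + p₀ * (x T) ^ 2 = M T * x₀ ^ 2) := by
  constructor
  · intro x u hx hx0 hu
    have hsq_nonneg : 0 ≤ ∫ t in (0 : ℝ)..T, (u t + b * M (T - t) * x t) ^ 2 :=
      integral_nonneg hT.le fun t _ => sq_nonneg _
    rw [integral_cost_eq hT.le hM hx hu, hx0, hM0]
    linarith
  · intro x u hx hx0 hu hfeedback
    have hsq_zero : ∫ t in (0 : ℝ)..T, (u t + b * M (T - t) * x t) ^ 2 = 0 := by
      rw [integral_congr (g := fun _ => 0) fun t ht => by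
        simp [hfeedback t (uIcc_of_le hT.le ▸ ht)]]
      exact integral_zero
    rw [integral_cost_eq hT.le hM hx hu, hsq_zero, hx0, hM0]
    ring

/-- Scalar LQR verification: if `M` solves the Riccati equation `Ṁ = 2aM − b²M² + q`,
`M₀ = p₀`, then every admissible trajectory has cost at least `M_T x₀²`, with equality
under the feedback `u_t = −b M_{T−t} x_t`; hence this feedback is optimal. -/
theorem scalar_lqr_verification
    (a b q p₀ T x₀ : ℝ) (hq : 0 ≤ q) (hp₀ : 0 ≤ p₀) (hT : 0 < T)
    (M : ℝ → ℝ)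
    (hM : ∀ t ∈ Set.Icc (0:ℝ) T,
      HasDerivAt M (2 * a * M t - b ^ 2 * (M t) ^ 2 + q) t)
    (hM0 : M 0 = p₀) :
    (∀ x u : ℝ → ℝ,
      (∀ t ∈ Set.Icc (0:ℝ) T, HasDerivAt x (a * x t + b * u t) t) →
      x 0 = x₀ → ContinuousOn u (Set.Icc 0 T) →
      M T * x₀ ^ 2 ≤ (∫ t in (0:ℝ)..T, (q * (x t) ^ 2 + (u t) ^ 2)) + p₀ * (x T) ^ 2) ∧
    (∀ x u : ℝ → ℝ,
      (∀ t ∈ Set.Icc (0:ℝ) T, HasDerivAt x (a * x t + b * u t) t) →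
      x 0 = x₀ → ContinuousOn u (Set.Icc 0 T) →
      (∀ t ∈ Set.Icc (0:ℝ) T, u t = -b * M (T - t) * x t) →
      (∫ t in (0:ℝ)..T, (q * (x t) ^ 2 + (u t) ^ 2)) + p₀ * (x T) ^ 2 = M T * x₀ ^ 2) :=
  scalar_lqr_verification_general a b q p₀ T x₀ hT M hM hM0
end

section
/- (Optimality of the decoupled graphon LQR control.) Let α₀ ∈ ℝ, T > 0, and let poly_B, poly_Q, poly_{P₀} be real polynomials with constant terms β₀, q₀, z₀ respectively, such that q₀ ≥ 0, z₀ ≥ 0, and poly_Q(λ_ℓ) ≥ 0, poly_{P₀}(λ_ℓ) ≥ 0 for all 1 ≤ ℓ ≤ d. Let L : [0,T] → ℝ solve L̇_t = 2α₀ L_t − β₀² L_t² + q₀, L_0 = z₀, and for each ℓ let M^ℓ : [0,T] → ℝ solve Ṁ^ℓ_t = 2(α₀+λ_ℓ) M^ℓ_t − poly_B(λ_ℓ)² (M^ℓ_t)² + poly_Q(λ_ℓ), M^ℓ_0 = poly_{P₀}(λ_ℓ). Then: (i) for every differentiable x : [0,T] → H and continuous u : [0,T] → H with ẋ_t = α₀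 x_t + A x_t + poly_B(A) u_t and x_0 = x₀, the cost J(u) = ∫₀^T (⟨x_t, poly_Q(A) x_t⟩ + ⟨u_t, u_t⟩) dt + ⟨x_T, poly_{P₀}(A) x_T⟩ satisfies J(u) ≥ L_T ‖x̆₀‖² + Σ_{ℓ=1}^d M^ℓ_T ⟨x₀, f_ℓ⟩²; and (ii) if moreover u_t = −β₀ L_{T−t} x̆_t − Σ_{ℓ=1}^d poly_B(λ_ℓ) M^ℓ_{T−t} ⟨x_t, f_ℓ⟩ f_ℓ for all t, then J(u) = L_T ‖x̆₀‖² + Σ_{ℓ=1}^d M^ℓ_T ⟨x₀, f_ℓ⟩²; hence this feedback law is optimal. -/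
/-!
Every `p(A)` acts on the eigencoordinate `⟪x, f ℓ⟫` as multiplication by `p(λ_ℓ)` and on the
auxiliary component `x̆` as multiplication by the constant term `p(0)`, so the state equation
splits into `d + 1` independent systems `ẏ = a y + b w` with running cost `q‖y‖² + ‖w‖²`.
For each of them, if `P` solves `Ṗ = 2aP − b²P² + q`, then `t ↦ P(T − t)‖y_t‖²` has derivative
`‖w_t + b P(T − t) y_t‖² − (q‖y_t‖² + ‖w_t‖²)`. Integrating over `[0, T]`, the cost exceeds
`P(T)‖y₀‖²` by the integral of a square, which vanishes for the feedback `w = −b P(T − t) y`.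
-/

open RealInnerProductSpace Polynomial Finset

theorem LinearMap.map_aeval_apply_eq_eval_smul {R E F : Type*} [CommRing R]
    [TopologicalSpace E] [AddCommGroup E] [Module R E] [ContinuousConstSMul R E]
    [IsTopologicalAddGroup E] [AddCommMonoid F] [Module R F]
    (φ : E →ₗ[R] F) {A : E →L[R] E} {c : R} (h : ∀ v, φ (A v) = c • φ v) (p : R[X]) (v : E) :
    φ (aeval A p v) = p.eval c • φ v := by
  induction p using Polynomial.induction_on generalizing v with
  | C a => simp
  | add p q hp hq => simp [hp, hq, add_smul]
  | monomial n a ih =>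
    rw [pow_succ, ← mul_assoc, map_mul, aeval_X, mul_apply_eq_comp, ih, h, smul_smul, eval_mul_X]

section Riccati

open Set MeasureTheory

variable {E : Type*} [NormedAddCommGroup E]

theorem intervalIntegrable_quadratic_cost {y w : ℝ → E} {q T : ℝ} (hT : 0 ≤ T)
    (hy : ContinuousOn y (Icc 0 T)) (hw : ContinuousOn w (Icc 0 T)) :
    IntervalIntegrable (fun t => q * ‖y t‖ ^ 2 + ‖w t‖ ^ 2) volume 0 T :=
  ((continuousOn_const.mul (hy.norm.pow 2)).add (hw.norm.pow 2)).intervalIntegrable_of_Icc hT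

variable [InnerProductSpace ℝ E]

theorem hasDerivAt_riccati_mul_norm_sq {y w : ℝ → E} {P : ℝ → ℝ} {a b q T t : ℝ}
    (hy : HasDerivAt y (a • y t + b • w t) t)
    (hP : HasDerivAt P (2 * a * P (T - t) - b ^ 2 * P (T - t) ^ 2 + q) (T - t)) :
    HasDerivAt (fun s => P (T - s) * ‖y s‖ ^ 2)
      (‖w t + (b * P (T - t)) • y t‖ ^ 2 - (q * ‖y t‖ ^ 2 + ‖w t‖ ^ 2)) t := by
  refine ((hP.comp_const_sub T t).mul hy.norm_sq).congr_deriv ?_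
  rw [norm_add_sq_real, norm_smul, mul_pow, Real.norm_eq_abs, sq_abs, inner_smul_right,
    inner_add_right, inner_smul_right, inner_smul_right, real_inner_self_eq_norm_sq,
    real_inner_comm]
  ring

theorem integral_cost_add_terminal_eq_riccati {y w : ℝ → E} {P : ℝ → ℝ} {a b q T : ℝ}
    (hT : 0 ≤ T) (hy : ∀ t ∈ Icc 0 T, HasDerivAt y (a • y t + b • w t) t)
    (hw : ContinuousOn w (Icc 0 T))
    (hP : ∀ t ∈ Icc 0 T, HasDerivAt P (2 * a * P t - b ^ 2 * P t ^ 2 + q) t) :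
    (∫ t in 0..T, (q * ‖y t‖ ^ 2 + ‖w t‖ ^ 2)) + P 0 * ‖y T‖ ^ 2
      = P T * ‖y 0‖ ^ 2 + ∫ t in 0..T, ‖w t + (b * P (T - t)) • y t‖ ^ 2 := by
  have hrev : MapsTo (fun t => T - t) (Icc 0 T) (Icc 0 T) :=
    fun t ht => ⟨by linarith [ht.2], by linarith [ht.1]⟩
  have hyc : ContinuousOn y (Icc 0 T) := fun t ht => (hy t ht).continuousAt.continuousWithinAt
  have hPc : ContinuousOn (fun t => P (T - t)) (Icc 0 T) :=
    ContinuousOn.comp (fun t ht => (hP t ht).continuousAt.continuousWithinAt)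
      (continuousOn_const.sub continuousOn_id) hrev
  have hcost := intervalIntegrable_quadratic_cost (q := q) hT hyc hw
  have hgap : IntervalIntegrable (fun t => ‖w t + (b * P (T - t)) • y t‖ ^ 2) volume 0 T :=
    ((hw.add ((continuousOn_const.mul hPc).smul hyc)).norm.pow 2).intervalIntegrable_of_Icc hT
  have hFTC := intervalIntegral.integral_eq_sub_of_hasDerivAt (fun t ht =>
      hasDerivAt_riccati_mul_norm_sq (hy t (uIcc_of_le hT ▸ ht)) (hP _ (hrev (uIcc_of_le hT ▸ ht))))
    (hgap.sub hcost)
  rw [intervalIntegral.integral_sub hgap hcost] at hFTC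
  simp only [sub_self, sub_zero] at hFTC
  linarith

end Riccati

section Orthonormal

variable {H : Type*} [NormedAddCommGroup H] [InnerProductSpace ℝ H] {d : ℕ} {f : Fin d → H}

noncomputable def auxComponent (f : Fin d → H) : H →L[ℝ] H :=
  1 - ∑ ℓ, (innerSL ℝ (f ℓ)).smulRight (f ℓ)

theorem auxComponent_apply (f : Fin d → H) (v : H) :
    auxComponent f v = v - ∑ ℓ, ⟪v, f ℓ⟫ • f ℓ := by
  simp [auxComponent, real_inner_comm]

theorem auxComponent_add_sum (f : Fin d → H) (v : H) :
    auxComponent f v + ∑ ℓ, ⟪v, f ℓ⟫ • f ℓ = v := by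
  rw [auxComponent_apply, sub_add_cancel]

theorem inner_auxComponent_left (hf : Orthonormal ℝ f) (v : H) (j : Fin d) :
    ⟪auxComponent f v, f j⟫ = 0 := by
  simp [auxComponent_apply, inner_sub_left, hf.inner_left_fintype]

theorem auxComponent_sum_smul (hf : Orthonormal ℝ f) (b : Fin d → ℝ) :
    auxComponent f (∑ ℓ, b ℓ • f ℓ) = 0 := by
  simp only [auxComponent_apply, hf.inner_left_fintype, conj_trivial, sub_self]

theorem auxComponent_auxComponent (hf : Orthonormal ℝ f) (v : H) :
    auxComponent f (auxComponent f v) = auxComponent f v := by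
  conv_lhs => rw [auxComponent_apply f v]
  rw [map_sub, auxComponent_sum_smul hf, sub_zero]

theorem inner_eq_inner_auxComponent_add_sum (hf : Orthonormal ℝ f) (v w : H) :
    ⟪v, w⟫ = ⟪auxComponent f v, auxComponent f w⟫ + ∑ ℓ, ⟪v, f ℓ⟫ * ⟪w, f ℓ⟫ := by
  have hcross : ∀ (a : H) (b : Fin d → ℝ), ⟪auxComponent f a, ∑ ℓ, b ℓ • f ℓ⟫ = 0 := by
    intro a b
    simp [inner_sum, real_inner_smul_right, inner_auxComponent_left hf]
  conv_lhs => rw [← auxComponent_add_sum f v, ← auxComponent_add_sum f w]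
  rw [inner_add_left, inner_add_right, inner_add_right, hcross,
    real_inner_comm (auxComponent f w) (∑ ℓ, ⟪v, f ℓ⟫ • f ℓ), hcross, hf.inner_sum]
  simp

theorem norm_sq_eq_norm_sq_auxComponent_add_sum (hf : Orthonormal ℝ f) (v : H) :
    ‖v‖ ^ 2 = ‖auxComponent f v‖ ^ 2 + ∑ ℓ, ⟪v, f ℓ⟫ ^ 2 := by
  rw [← real_inner_self_eq_norm_sq, ← real_inner_self_eq_norm_sq,
    inner_eq_inner_auxComponent_add_sum hf v v]
  simp only [sq]

section Spectral

variable {lam : Fin d → ℝ} {A : H →L[ℝ] H}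

theorem inner_apply_eq_mul (hf : Orthonormal ℝ f)
    (hA : ∀ v, A v = ∑ ℓ, (lam ℓ * ⟪v, f ℓ⟫) • f ℓ) (v : H) (j : Fin d) :
    ⟪A v, f j⟫ = lam j * ⟪v, f j⟫ := by
  rw [hA v, hf.inner_left_fintype, conj_trivial]

theorem inner_aeval_apply_eq_eval_mul (hf : Orthonormal ℝ f)
    (hA : ∀ v, A v = ∑ ℓ, (lam ℓ * ⟪v, f ℓ⟫) • f ℓ) (p : ℝ[X]) (v : H) (j : Fin d) :
    ⟪aeval A p v, f j⟫ = p.eval (lam j) * ⟪v, f j⟫ := by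
  have hAj : ∀ v, (innerSL ℝ (f j) : H →ₗ[ℝ] ℝ) (A v) = lam j • innerSL ℝ (f j) v := by
    intro v
    simp only [ContinuousLinearMap.coe_coe, innerSL_apply_apply, real_inner_comm _ (f j),
      inner_apply_eq_mul hf hA, smul_eq_mul]
  simpa only [ContinuousLinearMap.coe_coe, innerSL_apply_apply, real_inner_comm _ (f j),
    smul_eq_mul] using
    (innerSL ℝ (f j) : H →ₗ[ℝ] ℝ).map_aeval_apply_eq_eval_smul hAj p v

theorem auxComponent_aeval_apply (hf : Orthonormal ℝ f)
    (hA : ∀ v, A v = ∑ ℓ, (lam ℓ * ⟪v, f ℓ⟫) • f ℓ) (p : ℝ[X]) (v : H) :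
    auxComponent f (aeval A p v) = p.coeff 0 • auxComponent f v := by
  have hA0 : ∀ v, (auxComponent f : H →ₗ[ℝ] H) (A v) = (0 : ℝ) • auxComponent f v := by
    intro v
    rw [ContinuousLinearMap.coe_coe, hA v, auxComponent_sum_smul hf, zero_smul]
  simpa only [coeff_zero_eq_eval_zero, ContinuousLinearMap.coe_coe] using
    (auxComponent f : H →ₗ[ℝ] H).map_aeval_apply_eq_eval_smul hA0 p v

theorem inner_aeval_apply_self (hf : Orthonormal ℝ f)
    (hA : ∀ v, A v = ∑ ℓ, (lam ℓ * ⟪v, f ℓ⟫) • f ℓ) (p : ℝ[X]) (v : H) :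
    ⟪v, aeval A p v⟫
      = p.coeff 0 * ‖auxComponent f v‖ ^ 2 + ∑ ℓ, p.eval (lam ℓ) * ⟪v, f ℓ⟫ ^ 2 := by
  rw [inner_eq_inner_auxComponent_add_sum hf, auxComponent_aeval_apply hf hA,
    real_inner_smul_right, real_inner_self_eq_norm_sq]
  congr 1
  refine sum_congr rfl fun ℓ _ => ?_
  rw [inner_aeval_apply_eq_eval_mul hf hA]
  ring

theorem inner_aeval_apply_self_add_inner_self (hf : Orthonormal ℝ f)
    (hA : ∀ v, A v = ∑ ℓ, (lam ℓ * ⟪v, f ℓ⟫) • f ℓ) (p : ℝ[X]) (v w : H) :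
    ⟪v, aeval A p v⟫ + ⟪w, w⟫
      = (p.coeff 0 * ‖auxComponent f v‖ ^ 2 + ‖auxComponent f w‖ ^ 2)
        + ∑ ℓ, (p.eval (lam ℓ) * ⟪v, f ℓ⟫ ^ 2 + ⟪w, f ℓ⟫ ^ 2) := by
  rw [inner_aeval_apply_self hf hA, real_inner_self_eq_norm_sq,
    norm_sq_eq_norm_sq_auxComponent_add_sum hf w, sum_add_distrib]
  ring

section Dynamics

variable {x u : ℝ → H} {α t : ℝ} {p : ℝ[X]}

theorem hasDerivAt_inner_of_hasDerivAt_state (hf : Orthonormal ℝ f)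
    (hA : ∀ v, A v = ∑ ℓ, (lam ℓ * ⟪v, f ℓ⟫) • f ℓ)
    (hx : HasDerivAt x (α • x t + A (x t) + aeval A p (u t)) t) (j : Fin d) :
    HasDerivAt (fun s => ⟪x s, f j⟫)
      ((α + lam j) • ⟪x t, f j⟫ + p.eval (lam j) • ⟪u t, f j⟫) t := by
  refine (hx.inner ℝ (hasDerivAt_const t (f j))).congr_deriv ?_
  rw [inner_zero_right, zero_add, inner_add_left, inner_add_left, real_inner_smul_left,
    inner_apply_eq_mul hf hA, inner_aeval_apply_eq_eval_mul hf hA, smul_eq_mul, smul_eq_mul]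
  ring

theorem hasDerivAt_auxComponent_of_hasDerivAt_state (hf : Orthonormal ℝ f)
    (hA : ∀ v, A v = ∑ ℓ, (lam ℓ * ⟪v, f ℓ⟫) • f ℓ)
    (hx : HasDerivAt x (α • x t + A (x t) + aeval A p (u t)) t) :
    HasDerivAt (fun s => auxComponent f (x s))
      (α • auxComponent f (x t) + p.coeff 0 • auxComponent f (u t)) t := by
  refine ((auxComponent f).hasFDerivAt.comp_hasDerivAt t hx).congr_deriv ?_
  rw [map_add, map_add, map_smul, auxComponent_aeval_apply hf hA, hA (x t),
    auxComponent_sum_smul hf, add_zero]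

end Dynamics

open Set MeasureTheory in
theorem graphon_lqr_cost_eq (hf : Orthonormal ℝ f)
    (hA : ∀ v, A v = ∑ ℓ, (lam ℓ * ⟪v, f ℓ⟫) • f ℓ) {α₀ T : ℝ} (hT : 0 ≤ T)
    {polyB polyQ polyP₀ : ℝ[X]} {L : ℝ → ℝ}
    (hL : ∀ t ∈ Icc 0 T,
      HasDerivAt L (2 * α₀ * L t - polyB.coeff 0 ^ 2 * L t ^ 2 + polyQ.coeff 0) t)
    (hL0 : L 0 = polyP₀.coeff 0) {M : Fin d → ℝ → ℝ}
    (hM : ∀ ℓ, ∀ t ∈ Icc 0 T, HasDerivAt (M ℓ) (2 * (α₀ + lam ℓ) * M ℓ t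
      - polyB.eval (lam ℓ) ^ 2 * M ℓ t ^ 2 + polyQ.eval (lam ℓ)) t)
    (hM0 : ∀ ℓ, M ℓ 0 = polyP₀.eval (lam ℓ)) {x u : ℝ → H}
    (hx : ∀ t ∈ Icc 0 T, HasDerivAt x (α₀ • x t + A (x t) + aeval A polyB (u t)) t)
    (hu : ContinuousOn u (Icc 0 T)) :
    (∫ t in 0..T, (⟪x t, aeval A polyQ (x t)⟫ + ⟪u t, u t⟫)) + ⟪x T, aeval A polyP₀ (x T)⟫
      = L T * ‖auxComponent f (x 0)‖ ^ 2 + ∑ ℓ, M ℓ T * ⟪x 0, f ℓ⟫ ^ 2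
        + ((∫ t in 0..T,
              ‖auxComponent f (u t) + (polyB.coeff 0 * L (T - t)) • auxComponent f (x t)‖ ^ 2)
          + ∑ ℓ, ∫ t in 0..T,
              (⟪u t, f ℓ⟫ + polyB.eval (lam ℓ) * M ℓ (T - t) * ⟪x t, f ℓ⟫) ^ 2) := by
  have hxc : ContinuousOn x (Icc 0 T) := fun t ht => (hx t ht).continuousAt.continuousWithinAt
  have haux := integral_cost_add_terminal_eq_riccati hT
    (fun t ht => hasDerivAt_auxComponent_of_hasDerivAt_state hf hA (hx t ht))
    ((auxComponent f).continuous.comp_continuousOn hu) hL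
  have hmode : ∀ ℓ, (∫ t in 0..T, (polyQ.eval (lam ℓ) * ⟪x t, f ℓ⟫ ^ 2 + ⟪u t, f ℓ⟫ ^ 2))
      + M ℓ 0 * ⟪x T, f ℓ⟫ ^ 2 = M ℓ T * ⟪x 0, f ℓ⟫ ^ 2
        + ∫ t in 0..T, (⟪u t, f ℓ⟫ + polyB.eval (lam ℓ) * M ℓ (T - t) * ⟪x t, f ℓ⟫) ^ 2 := by
    intro ℓ
    simpa only [Real.norm_eq_abs, sq_abs, smul_eq_mul, mul_assoc] using
      integral_cost_add_terminal_eq_riccati hT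
        (fun t ht => hasDerivAt_inner_of_hasDerivAt_state hf hA (hx t ht) ℓ)
        (hu.inner continuousOn_const) (hM ℓ)
  have hterminal : ⟪x T, aeval A polyP₀ (x T)⟫
      = L 0 * ‖auxComponent f (x T)‖ ^ 2 + ∑ ℓ, M ℓ 0 * ⟪x T, f ℓ⟫ ^ 2 := by
    simp only [inner_aeval_apply_self hf hA, hL0, hM0]
  have hauxi : IntervalIntegrable (fun t => polyQ.coeff 0 * ‖auxComponent f (x t)‖ ^ 2
      + ‖auxComponent f (u t)‖ ^ 2) volume 0 T :=
    intervalIntegrable_quadratic_cost hT ((auxComponent f).continuous.comp_continuousOn hxc)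
      ((auxComponent f).continuous.comp_continuousOn hu)
  have hmodei : ∀ ℓ, IntervalIntegrable
      (fun t => polyQ.eval (lam ℓ) * ⟪x t, f ℓ⟫ ^ 2 + ⟪u t, f ℓ⟫ ^ 2) volume 0 T := by
    intro ℓ
    have hxℓ : ContinuousOn (fun t => ⟪x t, f ℓ⟫) (Icc 0 T) := hxc.inner continuousOn_const
    have huℓ : ContinuousOn (fun t => ⟪u t, f ℓ⟫) (Icc 0 T) := hu.inner continuousOn_const
    simpa only [Real.norm_eq_abs, sq_abs] using
      intervalIntegrable_quadratic_cost (q := polyQ.eval (lam ℓ)) hT hxℓ huℓ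
  rw [intervalIntegral.integral_congr fun t _ => inner_aeval_apply_self_add_inner_self hf hA _ _ _,
    intervalIntegral.integral_add hauxi
      (by simpa only [sum_fn] using IntervalIntegrable.sum Finset.univ fun ℓ _ => hmodei ℓ),
    intervalIntegral.integral_finsetSum fun ℓ _ => hmodei ℓ, hterminal]
  have hmodes := sum_congr rfl fun ℓ (_ : ℓ ∈ Finset.univ) => hmode ℓ
  rw [sum_add_distrib, sum_add_distrib] at hmodes
  linear_combination haux + hmodes

end Spectral

end Orthonormal

theorem graphon_lqr_optimality_general
    {H : Type*} [NormedAddCommGroup H] [InnerProductSpace ℝ H]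
    {d : ℕ} (f : Fin d → H) (hf : Orthonormal ℝ f) (lam : Fin d → ℝ)
    (A : H →L[ℝ] H)
    (hA : ∀ v : H, A v = ∑ ℓ : Fin d, (lam ℓ * ⟪v, f ℓ⟫) • f ℓ)
    (α₀ T : ℝ) (hT : 0 < T)
    (polyB polyQ polyP₀ : Polynomial ℝ) (β₀ q₀ z₀ : ℝ)
    (hβ₀ : β₀ = polyB.coeff 0) (hq₀ : q₀ = polyQ.coeff 0) (hz₀ : z₀ = polyP₀.coeff 0)
    (L : ℝ → ℝ)
    (hL : ∀ t ∈ Set.Icc (0:ℝ) T,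
      HasDerivAt L (2 * α₀ * L t - β₀ ^ 2 * (L t) ^ 2 + q₀) t)
    (hL0 : L 0 = z₀)
    (M : Fin d → ℝ → ℝ)
    (hM : ∀ ℓ : Fin d, ∀ t ∈ Set.Icc (0:ℝ) T,
      HasDerivAt (M ℓ)
        (2 * (α₀ + lam ℓ) * M ℓ t
          - (Polynomial.eval (lam ℓ) polyB) ^ 2 * (M ℓ t) ^ 2
          + Polynomial.eval (lam ℓ) polyQ) t)
    (hM0 : ∀ ℓ : Fin d, M ℓ 0 = Polynomial.eval (lam ℓ) polyP₀)
    (x₀ : H) :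
    (∀ x u : ℝ → H,
      (∀ t ∈ Set.Icc (0:ℝ) T,
        HasDerivAt x (α₀ • x t + A (x t) + (Polynomial.aeval A polyB) (u t)) t) →
      x 0 = x₀ → ContinuousOn u (Set.Icc 0 T) →
      L T * ‖x₀ - ∑ ℓ : Fin d, ⟪x₀, f ℓ⟫ • f ℓ‖ ^ 2 + ∑ ℓ : Fin d, M ℓ T * ⟪x₀, f ℓ⟫ ^ 2
        ≤ (∫ t in (0:ℝ)..T,
            (⟪x t, (Polynomial.aeval A polyQ) (x t)⟫ + ⟪u t, u t⟫))
          + ⟪x T, (Polynomial.aeval A polyP₀) (x T)⟫) ∧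
    (∀ x u : ℝ → H,
      (∀ t ∈ Set.Icc (0:ℝ) T,
        HasDerivAt x (α₀ • x t + A (x t) + (Polynomial.aeval A polyB) (u t)) t) →
      x 0 = x₀ → ContinuousOn u (Set.Icc 0 T) →
      (∀ t ∈ Set.Icc (0:ℝ) T,
        u t = -(β₀ * L (T - t)) • (x t - ∑ ℓ : Fin d, ⟪x t, f ℓ⟫ • f ℓ)
          - ∑ ℓ : Fin d,
              (Polynomial.eval (lam ℓ) polyB * M ℓ (T - t) * ⟪x t, f ℓ⟫) • f ℓ) →
      (∫ t in (0:ℝ)..T,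
          (⟪x t, (Polynomial.aeval A polyQ) (x t)⟫ + ⟪u t, u t⟫))
        + ⟪x T, (Polynomial.aeval A polyP₀) (x T)⟫
      = L T * ‖x₀ - ∑ ℓ : Fin d, ⟪x₀, f ℓ⟫ • f ℓ‖ ^ 2
        + ∑ ℓ : Fin d, M ℓ T * ⟪x₀, f ℓ⟫ ^ 2) := by
  subst hβ₀ hq₀ hz₀
  simp only [← auxComponent_apply]
  refine ⟨fun x u hx hx0 hu => ?_, fun x u hx hx0 hu hfb => ?_⟩
  all_goals
    subst hx0
    rw [graphon_lqr_cost_eq hf hA hT.le hL hL0 hM hM0 hx hu]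
  · exact le_add_of_nonneg_right <| add_nonneg
      (intervalIntegral.integral_nonneg hT.le fun _ _ => sq_nonneg _)
      (sum_nonneg fun ℓ _ => intervalIntegral.integral_nonneg hT.le fun _ _ => sq_nonneg _)
  · have haux : Set.EqOn (fun t => ‖auxComponent f (u t)
        + (polyB.coeff 0 * L (T - t)) • auxComponent f (x t)‖ ^ 2) 0 (Set.uIcc 0 T) := by
      intro t ht
      simp [hfb t (Set.uIcc_of_le hT.le ▸ ht), auxComponent_sum_smul hf,
        auxComponent_auxComponent hf]
    have hmode : ∀ ℓ, Set.EqOn (fun t => (⟪u t, f ℓ⟫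
        + polyB.eval (lam ℓ) * M ℓ (T - t) * ⟪x t, f ℓ⟫) ^ 2) 0 (Set.uIcc 0 T) := by
      intro ℓ t ht
      simp [hfb t (Set.uIcc_of_le hT.le ▸ ht), inner_sub_left, real_inner_smul_left,
        inner_auxComponent_left hf, hf.inner_left_fintype]
    simp [intervalIntegral.integral_congr haux, intervalIntegral.integral_congr (hmode _)]

/-- Optimality of the decoupled graphon LQR control: the cost of any admissible
trajectory is at least `L_T ‖x̆₀‖² + Σ_ℓ M^ℓ_T ⟨x₀, f_ℓ⟩²`, with equality under the
feedback `u_t = −β₀ L_{T−t} x̆_t − Σ_ℓ poly_B(λ_ℓ) M^ℓ_{T−t} ⟨x_t, f_ℓ⟩ f_ℓ`;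
hence this feedback law is optimal. -/
theorem graphon_lqr_optimality
    {H : Type*} [NormedAddCommGroup H] [InnerProductSpace ℝ H] [CompleteSpace H]
    {d : ℕ} (f : Fin d → H) (hf : Orthonormal ℝ f) (lam : Fin d → ℝ)
    (A : H →L[ℝ] H)
    (hA : ∀ v : H, A v = ∑ ℓ : Fin d, (lam ℓ * ⟪v, f ℓ⟫) • f ℓ)
    (α₀ T : ℝ) (hT : 0 < T)
    (polyB polyQ polyP₀ : Polynomial ℝ) (β₀ q₀ z₀ : ℝ)
    (hβ₀ : β₀ = polyB.coeff 0) (hq₀ : q₀ = polyQ.coeff 0) (hz₀ : z₀ = polyP₀.coeff 0)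
    (hq₀pos : 0 ≤ q₀) (hz₀pos : 0 ≤ z₀)
    (hQpos : ∀ ℓ : Fin d, 0 ≤ Polynomial.eval (lam ℓ) polyQ)
    (hPpos : ∀ ℓ : Fin d, 0 ≤ Polynomial.eval (lam ℓ) polyP₀)
    (L : ℝ → ℝ)
    (hL : ∀ t ∈ Set.Icc (0:ℝ) T,
      HasDerivAt L (2 * α₀ * L t - β₀ ^ 2 * (L t) ^ 2 + q₀) t)
    (hL0 : L 0 = z₀)
    (M : Fin d → ℝ → ℝ)
    (hM : ∀ ℓ : Fin d, ∀ t ∈ Set.Icc (0:ℝ) T,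
      HasDerivAt (M ℓ)
        (2 * (α₀ + lam ℓ) * M ℓ t
          - (Polynomial.eval (lam ℓ) polyB) ^ 2 * (M ℓ t) ^ 2
          + Polynomial.eval (lam ℓ) polyQ) t)
    (hM0 : ∀ ℓ : Fin d, M ℓ 0 = Polynomial.eval (lam ℓ) polyP₀)
    (x₀ : H) :
    (∀ x u : ℝ → H,
      (∀ t ∈ Set.Icc (0:ℝ) T,
        HasDerivAt x (α₀ • x t + A (x t) + (Polynomial.aeval A polyB) (u t)) t) →
      x 0 = x₀ → ContinuousOn u (Set.Icc 0 T) →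
      L T * ‖x₀ - ∑ ℓ : Fin d, ⟪x₀, f ℓ⟫ • f ℓ‖ ^ 2 + ∑ ℓ : Fin d, M ℓ T * ⟪x₀, f ℓ⟫ ^ 2
        ≤ (∫ t in (0:ℝ)..T,
            (⟪x t, (Polynomial.aeval A polyQ) (x t)⟫ + ⟪u t, u t⟫))
          + ⟪x T, (Polynomial.aeval A polyP₀) (x T)⟫) ∧
    (∀ x u : ℝ → H,
      (∀ t ∈ Set.Icc (0:ℝ) T,
        HasDerivAt x (α₀ • x t + A (x t) + (Polynomial.aeval A polyB) (u t)) t) →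
      x 0 = x₀ → ContinuousOn u (Set.Icc 0 T) →
      (∀ t ∈ Set.Icc (0:ℝ) T,
        u t = -(β₀ * L (T - t)) • (x t - ∑ ℓ : Fin d, ⟪x t, f ℓ⟫ • f ℓ)
          - ∑ ℓ : Fin d,
              (Polynomial.eval (lam ℓ) polyB * M ℓ (T - t) * ⟪x t, f ℓ⟫) • f ℓ) →
      (∫ t in (0:ℝ)..T,
          (⟪x t, (Polynomial.aeval A polyQ) (x t)⟫ + ⟪u t, u t⟫))
        + ⟪x T, (Polynomial.aeval A polyP₀) (x T)⟫
      = L T * ‖x₀ - ∑ ℓ : Fin d, ⟪x₀, f ℓ⟫ • f ℓ‖ ^ 2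
        + ∑ ℓ : Fin d, M ℓ T * ⟪x₀, f ℓ⟫ ^ 2) :=
  graphon_lqr_optimality_general f hf lam A hA α₀ T hT polyB polyQ polyP₀ β₀ q₀ z₀ hβ₀ hq₀ hz₀ L hL
    hL0 M hM hM0 x₀
end
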